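/- arXiv:2102.12987 — 5 statements merged into one kernel-verified Lean document; each statement's English description precedes it below -/
import Mathlib

section
/- Let f : ℝ → ℝ be integrable. If the primitive W_f belongs to L²(ℝ), then ∫_ℝ f(x) dx = 0 (every function of the one-dimensional Coulomb space is neutral). -/
open MeasureTheory Real

/-- The primitive `W_f(x) = ∫_{-∞}^x f(y) dy`. -/
noncomputable def W (f : ℝ → ℝ) (x : ℝ) : ℝ := ∫ y in Set.Iic x, f y

/-! `W f` tends to `∫ f` at `+∞`, while a function in `Lᵖ(ℝ)`, `p < ∞`, can only have limit `0`
there: otherwise `‖W f‖` stays above `|∫ f| / 2` on a half-line, which has infinite measure. -/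

open Filter Topology ENNReal NNReal

theorem MeasureTheory.MemLp.eq_zero_of_tendsto_atTop {E : Type*} [NormedAddCommGroup E]
    {g : ℝ → E} {p : ℝ≥0∞} (hg : MemLp g p volume) (hp_ne_zero : p ≠ 0) (hp_ne_top : p ≠ ∞)
    {c : E} (hc : Tendsto g atTop (𝓝 c)) : c = 0 := by
  by_contra hc_ne
  have hc_pos : 0 < ‖c‖₊ := nnnorm_pos.2 hc_ne
  set ε : ℝ≥0 := ‖c‖₊ / 2
  have hε_ne : ε ≠ 0 := (div_pos hc_pos two_pos).ne'
  have hfar : ∀ᶠ x in atTop, ε ≤ ‖g x‖₊ :=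
    hc.nnnorm.eventually_const_le (NNReal.half_lt_self hc_pos.ne')
  obtain ⟨M, hM⟩ := hfar.exists_forall_of_atTop
  have hinfinite : volume { x | ε ≤ ‖g x‖₊ } = ∞ :=
    top_le_iff.1 (Real.volume_Ici (a := M) ▸ measure_mono fun x hx => hM x hx)
  exact (hg.meas_ge_lt_top hp_ne_zero hp_ne_top hε_ne).ne hinfinite

theorem tendsto_W_atTop {f : ℝ → ℝ} (hf : Integrable f) :
    Tendsto (W f) atTop (𝓝 (∫ x, f x)) :=
  (aecover_Iic tendsto_id).integral_tendsto_of_countably_generated hf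

/-- Every function of the one-dimensional Coulomb space is neutral: if `f` is integrable
and its primitive `W f` is in `L²(ℝ)`, then `∫ f = 0`. -/
theorem stmt0 (f : ℝ → ℝ) (hf : Integrable f)
    (hW : MemLp (W f) 2 volume) :
    ∫ x, f x = 0 :=
  hW.eq_zero_of_tendsto_atTop two_ne_zero ofNat_ne_top (tendsto_W_atTop hf)
end

section
/- Let f : ℝ → ℝ be integrable with ∫_ℝ f = 0 and x ↦ |x| f(x) integrable. Then W_f ∈ L²(ℝ) and D₁(f) = −2π ∬_{ℝ×ℝ} |x − y| f(x) f(y) dx dy; i.e. the regularized Hartree energy coincides with the formal Hartree energy for neutral functions with finite first moment. -/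
/-!
With `kernel x t = 1_{x ≤ t} - 1_{0 ≤ t}`, neutrality gives `W_f(t) = ∫ f(x) kernel(x, t) dx`,
and `kernel x` is `±` the indicator of the interval between `0` and `x`, so
`∫ |kernel x t| dt = |x|`.
Squaring `W_f` and applying Fubini (justified by the first moment of `f`) gives
`∫ W_f² = ∬ f(x) f(y) (|x| + |y| - |x - y|) / 2`, by polarization of
`∫ (1_{x ≤ t} - 1_{y ≤ t})² dt = |x - y|`. Neutrality again kills the `|x|` and `|y|` terms.
Integrability of `W_f²` comes out of the same Fubini argument.
-/

open MeasureTheory Real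

/-- The regularized one-dimensional Hartree energy `D₁(f) = 4π ∫ |W_f|²`. -/
noncomputable def D1 (f : ℝ → ℝ) : ℝ := 4 * π * ∫ x, (W f x) ^ 2

open Set

namespace Hartree

noncomputable def step (x t : ℝ) : ℝ := if x ≤ t then 1 else 0

noncomputable def kernel (x t : ℝ) : ℝ := step x t - step 0 t

lemma sq_step_sub_step_of_le {x y : ℝ} (h : x ≤ y) (t : ℝ) :
    (step x t - step y t) ^ 2 = (Ico x y).indicator 1 t := by
  simp only [step, indicator_apply, mem_Ico, Pi.one_apply]
  split_ifs <;> grind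

lemma sq_step_sub_step (x y t : ℝ) :
    (step x t - step y t) ^ 2 = (Ico (min x y) (max x y)).indicator 1 t := by
  rcases le_total x y with h | h
  · rw [min_eq_left h, max_eq_right h, sq_step_sub_step_of_le h]
  · rw [min_eq_right h, max_eq_left h, ← sq_step_sub_step_of_le h, ← neg_sub, neg_sq]

lemma integrable_sq_step_sub_step (x y : ℝ) :
    Integrable fun t => (step x t - step y t) ^ 2 := by
  simp only [sq_step_sub_step]
  exact (integrable_indicator_iff measurableSet_Ico).2 (integrableOn_const measure_Ico_lt_top.ne)

lemma integral_sq_step_sub_step (x y : ℝ) : ∫ t, (step x t - step y t) ^ 2 = |x - y| := by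
  simp only [sq_step_sub_step]
  rw [integral_indicator_one measurableSet_Ico, measureReal_def, Real.volume_Ico,
    ENNReal.toReal_ofReal (sub_nonneg.2 min_le_max), max_sub_min_eq_abs, abs_sub_comm]

/-- Polarization of `∫ (step x - step y)² = |x - y|` around the base point `0`. -/
lemma integral_kernel_mul_kernel (x y : ℝ) :
    ∫ t, kernel x t * kernel y t = (|x| + |y| - |x - y|) / 2 := by
  have polarization : ∀ t, kernel x t * kernel y t =
      ((step x t - step 0 t) ^ 2 + (step y t - step 0 t) ^ 2 - (step x t - step y t) ^ 2) / 2 :=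
    fun t => by simp only [kernel]; ring
  have integrable_sum :
      Integrable fun t => (step x t - step 0 t) ^ 2 + (step y t - step 0 t) ^ 2 :=
    (integrable_sq_step_sub_step x 0).add (integrable_sq_step_sub_step y 0)
  simp only [polarization]
  rw [integral_div, integral_sub integrable_sum (integrable_sq_step_sub_step x y),
    integral_add (integrable_sq_step_sub_step x 0) (integrable_sq_step_sub_step y 0),
    integral_sq_step_sub_step, integral_sq_step_sub_step, integral_sq_step_sub_step,
    sub_zero, sub_zero]

lemma abs_kernel (x t : ℝ) : |kernel x t| = (step x t - step 0 t) ^ 2 := by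
  simp only [kernel, step]
  split_ifs <;> norm_num

lemma abs_kernel_le_one (x t : ℝ) : |kernel x t| ≤ 1 := by
  rw [abs_kernel, sq_step_sub_step, indicator_apply]
  split_ifs <;> norm_num

lemma integrable_abs_kernel (x : ℝ) : Integrable fun t => |kernel x t| := by
  simpa only [abs_kernel] using integrable_sq_step_sub_step x 0

lemma integral_abs_kernel (x : ℝ) : ∫ t, |kernel x t| = |x| := by
  simp only [abs_kernel, integral_sq_step_sub_step, sub_zero]

lemma measurable_kernel : Measurable (Function.uncurry kernel) := by
  have measurable_step : ∀ {g : ℝ × ℝ → ℝ}, Measurable g →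
      Measurable fun p : ℝ × ℝ => step (g p) p.2 := fun hg =>
    Measurable.ite (measurableSet_le hg measurable_snd) measurable_const measurable_const
  exact (measurable_step measurable_fst).sub (measurable_step measurable_const)

lemma continuous_W {f : ℝ → ℝ} (hf : Integrable f) : Continuous (W f) :=
  continuous_iff_continuousAt.2 fun a =>
    (hf.integrableOn.continuousOn_Iic_primitive_Iic (a₀ := a + 1)).continuousAt
      (Iic_mem_nhds (lt_add_one a))

variable {f : ℝ → ℝ}

/-- Neutrality lets us subtract `step 0 t * ∫ f`, which makes the kernel integrable in `t`. -/
lemma W_eq_integral_mul_kernel (hf : Integrable f) (h0 : ∫ x, f x = 0) (t : ℝ) :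
    W f t = ∫ x, f x * kernel x t := by
  have h : ∀ x, f x * kernel x t = (Iic t).indicator f x - step 0 t * f x := fun x => by
    simp only [kernel, step, indicator_apply, mem_Iic]
    split_ifs <;> ring
  simp only [h]
  rw [integral_sub (hf.indicator measurableSet_Iic) (hf.const_mul _),
    integral_indicator measurableSet_Iic, integral_const_mul, h0, mul_zero, sub_zero, W]

lemma sq_W_eq_integral_prod (hf : Integrable f) (h0 : ∫ x, f x = 0) (t : ℝ) :
    W f t ^ 2 = ∫ p : ℝ × ℝ, f p.1 * f p.2 * (kernel p.1 t * kernel p.2 t) := by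
  rw [sq, W_eq_integral_mul_kernel hf h0, Measure.volume_eq_prod, ← integral_prod_mul]
  congr 1 with p
  ring

lemma integrable_mul_kernel_mul_kernel (hf : Integrable f)
    (hm : Integrable fun x => |x| * f x) :
    Integrable
      (fun q : (ℝ × ℝ) × ℝ => f q.1.1 * f q.1.2 * (kernel q.1.1 q.2 * kernel q.1.2 q.2))
      ((volume.prod volume).prod volume) := by
  have hk : ∀ {g : (ℝ × ℝ) × ℝ → ℝ}, Measurable g →
      AEStronglyMeasurable (fun q : (ℝ × ℝ) × ℝ => kernel (g q) q.2)
        ((volume.prod volume).prod volume) := fun hg =>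
    (measurable_kernel.comp (hg.prodMk measurable_snd)).aestronglyMeasurable
  have hf₁ : AEStronglyMeasurable (fun q : (ℝ × ℝ) × ℝ => f q.1.1)
      ((volume.prod volume).prod volume) := hf.1.comp_fst.comp_fst
  have hf₂ : AEStronglyMeasurable (fun q : (ℝ × ℝ) × ℝ => f q.1.2)
      ((volume.prod volume).prod volume) := hf.1.comp_snd.comp_fst
  have dominant :
      Integrable (fun q : (ℝ × ℝ) × ℝ => ‖f q.1.1‖ * ‖f q.1.2‖ * |kernel q.1.1 q.2|)
        ((volume.prod volume).prod volume) := by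
    refine (integrable_prod_iff ?_).2 ⟨Filter.Eventually.of_forall fun p =>
      (integrable_abs_kernel p.1).const_mul (‖f p.1‖ * ‖f p.2‖), ?_⟩
    · exact (hf₁.norm.mul hf₂.norm).mul
        (continuous_abs.comp_aestronglyMeasurable (hk measurable_fst.fst))
    · simpa [integral_const_mul, integral_abs_kernel, abs_mul, mul_comm, mul_left_comm]
        using hm.norm.mul_prod hf.norm
  refine dominant.mono'
    ((hf₁.mul hf₂).mul ((hk measurable_fst.fst).mul (hk measurable_fst.snd)))
    (Filter.Eventually.of_forall fun q => ?_)
  rw [norm_mul, norm_mul, norm_mul, Real.norm_eq_abs (kernel _ _),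
    Real.norm_eq_abs (kernel _ _)]
  exact mul_le_mul_of_nonneg_left
    (mul_le_of_le_one_right (abs_nonneg _) (abs_kernel_le_one _ _)) (by positivity)

lemma integrable_sq_W (hf : Integrable f) (h0 : ∫ x, f x = 0)
    (hm : Integrable fun x => |x| * f x) : Integrable fun t => W f t ^ 2 := by
  simp only [sq_W_eq_integral_prod hf h0]
  exact (integrable_mul_kernel_mul_kernel hf hm).integral_prod_right

lemma integral_sq_W_eq_integral_prod (hf : Integrable f) (h0 : ∫ x, f x = 0)
    (hm : Integrable fun x => |x| * f x) :
    ∫ t, W f t ^ 2 = ∫ p : ℝ × ℝ, f p.1 * f p.2 * ((|p.1| + |p.2| - |p.1 - p.2|) / 2) := by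
  simp only [sq_W_eq_integral_prod hf h0]
  rw [← integral_integral_swap (integrable_mul_kernel_mul_kernel hf hm)]
  simp only [integral_const_mul, integral_kernel_mul_kernel]

lemma integrable_abs_sub_mul_mul (hf : Integrable f) (hm : Integrable fun x => |x| * f x) :
    Integrable (fun p : ℝ × ℝ => |p.1 - p.2| * f p.1 * f p.2) (volume.prod volume) := by
  refine ((hm.norm.mul_prod hf.norm).add (hf.norm.mul_prod hm.norm)).mono'
    ((continuous_abs.comp (continuous_fst.sub continuous_snd)).aestronglyMeasurable.mul
      hf.1.comp_fst |>.mul hf.1.comp_snd) (Filter.Eventually.of_forall fun p => ?_)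
  simp only [norm_mul, Real.norm_eq_abs, abs_abs, Pi.add_apply]
  nlinarith [mul_le_mul_of_nonneg_right (abs_sub p.1 p.2)
    (mul_nonneg (abs_nonneg (f p.1)) (abs_nonneg (f p.2)))]

/-- For neutral `f` the terms `|x|` and `|y|` of the kernel integrate to zero. -/
lemma integral_mul_mul_polarization (hf : Integrable f) (h0 : ∫ x, f x = 0)
    (hm : Integrable fun x => |x| * f x) :
    ∫ p : ℝ × ℝ, f p.1 * f p.2 * ((|p.1| + |p.2| - |p.1 - p.2|) / 2) =
      -(∫ p : ℝ × ℝ, |p.1 - p.2| * f p.1 * f p.2) / 2 := by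
  have expand : ∀ p : ℝ × ℝ, f p.1 * f p.2 * ((|p.1| + |p.2| - |p.1 - p.2|) / 2) =
      ((|p.1| * f p.1) * f p.2 + f p.1 * (|p.2| * f p.2) - |p.1 - p.2| * f p.1 * f p.2) / 2 :=
    fun p => by ring
  have integrable_moments : Integrable (fun p : ℝ × ℝ => |p.1| * f p.1 * f p.2 +
      f p.1 * (|p.2| * f p.2)) (volume.prod volume) := (hm.mul_prod hf).add (hf.mul_prod hm)
  simp only [expand]
  rw [Measure.volume_eq_prod, integral_div,
    integral_sub integrable_moments (integrable_abs_sub_mul_mul hf hm),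
    integral_add (hm.mul_prod hf) (hf.mul_prod hm),
    integral_prod_mul (fun x => |x| * f x) f, integral_prod_mul f (fun y => |y| * f y), h0]
  ring

end Hartree

open Hartree

/-- For a neutral integrable `f` with finite first moment, `W_f ∈ L²` and the regularized
Hartree energy coincides with the formal one `-2π ∬ |x-y| f(x) f(y)`. -/
theorem stmt2 (f : ℝ → ℝ) (hf : Integrable f) (h0 : ∫ x, f x = 0)
    (hm : Integrable (fun x => |x| * f x)) :
    MemLp (W f) 2 volume ∧
    D1 f = -2 * π * ∫ x, ∫ y, |x - y| * f x * f y := by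
  refine ⟨(memLp_two_iff_integrable_sq (continuous_W hf).aestronglyMeasurable).2
    (integrable_sq_W hf h0 hm), ?_⟩
  rw [D1, integral_sq_W_eq_integral_prod hf h0 hm, integral_mul_mul_polarization hf h0 hm,
    Measure.volume_eq_prod, integral_prod _ (integrable_abs_sub_mul_mul hf hm)]
  ring
end

section
/- Let f : ℝ → ℝ be integrable with ∫_ℝ f = 0 and x ↦ |x| f(x) integrable. Then D₁(f) = 4π ( ∬_{[0,∞)×[0,∞)} min{x, y} f(x) f(y) dx dy + ∬_{(−∞,0]×(−∞,0]} min{|x|, |y|} f(x) f(y) dx dy ), and moreover D₁(f) = ∫_ℝ Φ_f(x) f(x) dx. -/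
/-
On `[0, ∞)` neutrality gives `W_f(x) = -∫_x^∞ f`, so `W_f(x)² = ∫∫_{s, t > x} f(s) f(t)`, and
integrating over `x ≥ 0` produces `∫∫ min(s, t) f(s) f(t)`. Likewise `Φ_f(t) = 4π ∫_0^t ∫_x^∞ f`
for `t ≥ 0`, which turns `∫_0^∞ Φ_f f` into `4π ∫_0^∞ W_f²`. Every exchange of integrals is an
instance of `∫_0^∞ g(x) ∫_x^∞ f = ∫_0^∞ f(t) ∫_0^t g` for bounded `g`, which is legitimate because
`∫_0^∞ t |f(t)| < ∞`. The negative half-line reduces to the positive one through `f ↦ f(-·)`,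
which sends `W_f` to `-W_f(-·)` and `Φ_f` to `Φ_f(-·)`.
-/

open MeasureTheory Real

/-- The mean-field potential `Φ_f(x) = -4π ∫_0^x W_f(y) dy`. -/
noncomputable def Phi (f : ℝ → ℝ) (x : ℝ) : ℝ := -4 * π * ∫ y in (0:ℝ)..x, W f y

open Set

local notation "μ₀" => Measure.restrict (volume : Measure ℝ) (Ici (0 : ℝ))

section

variable {f g : ℝ → ℝ}

lemma integral_indicator_lt_left {x : ℝ} (hx : 0 ≤ x) (F : ℝ × ℝ → ℝ) :
    ∫ t, {p : ℝ × ℝ | p.1 < p.2}.indicator F (x, t) ∂μ₀ = ∫ t in Ioi x, F (x, t) := by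
  have h : (fun t => {p : ℝ × ℝ | p.1 < p.2}.indicator F (x, t))
      = (Ioi x).indicator fun t => F (x, t) := by
    ext t; simp [indicator_apply]
  rw [h, integral_indicator measurableSet_Ioi, Measure.restrict_restrict measurableSet_Ioi,
    inter_eq_left.2 (Ioi_subset_Ici hx)]

lemma integral_indicator_lt_right (t : ℝ) (F : ℝ × ℝ → ℝ) :
    ∫ x, {p : ℝ × ℝ | p.1 < p.2}.indicator F (x, t) ∂μ₀ = ∫ x in Ico 0 t, F (x, t) := by
  have h : (fun x => {p : ℝ × ℝ | p.1 < p.2}.indicator F (x, t))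
      = (Iio t).indicator fun x => F (x, t) := by
    ext x; simp [indicator_apply]
  rw [h, integral_indicator measurableSet_Iio, Measure.restrict_restrict measurableSet_Iio,
    Iio_inter_Ici]

lemma integrable_indicator_lt_norm_snd (hf : AEStronglyMeasurable f μ₀)
    (hm : IntegrableOn (fun t => t * f t) (Ici 0)) :
    Integrable ({p : ℝ × ℝ | p.1 < p.2}.indicator fun p => ‖f p.2‖) (Measure.prod μ₀ μ₀) := by
  refine (integrable_prod_iff' (hf.norm.comp_snd.indicator
    (measurableSet_lt measurable_fst measurable_snd))).2 ⟨.of_forall fun t => ?_, ?_⟩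
  · have h : (fun x => {p : ℝ × ℝ | p.1 < p.2}.indicator (fun p => ‖f p.2‖) (x, t))
        = (Iio t).indicator fun _ => ‖f t‖ := by
      ext x; simp [indicator_apply]
    rw [h, integrable_indicator_iff measurableSet_Iio, IntegrableOn,
      Measure.restrict_restrict measurableSet_Iio, ← IntegrableOn, Iio_inter_Ici]
    exact integrableOn_const measure_Ico_lt_top.ne
  · refine hm.norm.congr ?_
    filter_upwards [ae_restrict_mem measurableSet_Ici] with t ht
    simp_rw [norm_indicator_eq_indicator_norm, norm_norm]
    rw [integral_indicator_lt_right]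
    dsimp only
    rw [setIntegral_const, Real.volume_real_Ico_of_le ht,
      norm_mul, Real.norm_of_nonneg ht, smul_eq_mul, sub_zero]

lemma setIntegral_mul_integral_Ioi {C : ℝ} (hf : AEStronglyMeasurable f μ₀)
    (hm : IntegrableOn (fun t => t * f t) (Ici 0)) (hg : AEStronglyMeasurable g μ₀)
    (hgC : ∀ x, ‖g x‖ ≤ C) :
    ∫ x in Ici 0, g x * ∫ t in Ioi x, f t = ∫ t in Ici 0, f t * ∫ x in Ico 0 t, g x := by
  set F := {p : ℝ × ℝ | p.1 < p.2}.indicator fun p => g p.1 * f p.2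
  have hF : Integrable F (Measure.prod μ₀ μ₀) := by
    refine ((integrable_indicator_lt_norm_snd hf hm).const_mul C).mono'
      ((hg.comp_fst.mul hf.comp_snd).indicator (measurableSet_lt measurable_fst measurable_snd))
      (.of_forall fun p => ?_)
    by_cases hp : p.1 < p.2
    · simpa [F, hp, norm_mul] using mul_le_mul_of_nonneg_right (hgC p.1) (norm_nonneg (f p.2))
    · simp [F, hp]
  calc ∫ x in Ici 0, g x * ∫ t in Ioi x, f t = ∫ x, ∫ t, F (x, t) ∂μ₀ ∂μ₀ := by
        refine setIntegral_congr_fun measurableSet_Ici fun x hx => ?_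
        rw [integral_indicator_lt_left hx, ← integral_const_mul]
    _ = ∫ t, ∫ x, F (x, t) ∂μ₀ ∂μ₀ := integral_integral_swap hF
    _ = ∫ t in Ici 0, f t * ∫ x in Ico 0 t, g x := by
        simp_rw [F, integral_indicator_lt_right, mul_comm (g _), integral_const_mul]

lemma norm_setIntegral_le_integral_norm (hf : Integrable f) (s : Set ℝ) :
    ‖∫ t in s, f t‖ ≤ ∫ t, ‖f t‖ :=
  (norm_integral_le_integral_norm _).trans
    (setIntegral_le_integral hf.norm (.of_forall fun _ => norm_nonneg _))

lemma W_add_integral_Ioi (hf : Integrable f) (x : ℝ) :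
    W f x + ∫ t in Ioi x, f t = ∫ t, f t :=
  intervalIntegral.integral_Iic_add_Ioi hf.integrableOn hf.integrableOn

lemma continuous_W (hf : Integrable f) : Continuous (W f) := by
  have h : W f = fun x => W f 0 + ∫ t in (0:ℝ)..x, f t := by
    ext x
    rw [W, W, ← intervalIntegral.integral_Iic_sub_Iic hf.integrableOn hf.integrableOn]
    ring
  rw [h]
  exact continuous_const.add (hf.continuous_primitive 0)

lemma continuous_integral_Ioi (hf : Integrable f) : Continuous fun x => ∫ t in Ioi x, f t := by
  have h : (fun x => ∫ t in Ioi x, f t) = fun x => (∫ t, f t) - W f x :=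
    funext fun x => by linarith [W_add_integral_Ioi hf x]
  rw [h]
  exact continuous_const.sub (continuous_W hf)

lemma integrableOn_integral_Ioi (hf : Integrable f)
    (hm : IntegrableOn (fun t => t * f t) (Ici 0)) :
    IntegrableOn (fun x => ∫ t in Ioi x, f t) (Ici 0) := by
  refine (integrable_indicator_lt_norm_snd hf.1.restrict hm).integral_prod_left.mono'
    (continuous_integral_Ioi hf).aestronglyMeasurable ?_
  filter_upwards [ae_restrict_mem measurableSet_Ici] with x hx
  rw [integral_indicator_lt_left hx]
  exact norm_integral_le_integral_norm _

lemma setIntegral_integral_Ioi_mul_self (hf : Integrable f)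
    (hm : IntegrableOn (fun t => t * f t) (Ici 0)) :
    ∫ x in Ici 0, (∫ t in Ioi x, f t) * ∫ t in Ioi x, f t
      = ∫ t in Ici 0, f t * ∫ x in Ico 0 t, ∫ s in Ioi x, f s :=
  setIntegral_mul_integral_Ioi hf.1.restrict hm (continuous_integral_Ioi hf).aestronglyMeasurable
    (fun _ => norm_setIntegral_le_integral_norm hf _)

lemma setIntegral_Ico_integral_Ioi (hf : Integrable f)
    (hm : IntegrableOn (fun t => t * f t) (Ici 0))
    {s : ℝ} (hs : 0 ≤ s) :
    ∫ x in Ico 0 s, ∫ t in Ioi x, f t = ∫ t in Ici 0, f t * min t s := by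
  have h := setIntegral_mul_integral_Ioi (g := (Iio s).indicator 1) (C := 1) hf.1.restrict hm
    (aestronglyMeasurable_one.indicator measurableSet_Iio)
    (fun x => (norm_indicator_le_norm_self 1 x).trans (by simp))
  have hl : ∀ x, (Iio s).indicator 1 x * ∫ t in Ioi x, f t
      = (Iio s).indicator (fun x => ∫ t in Ioi x, f t) x := fun x => by
    by_cases hx : x < s <;> simp [hx]
  have hr : ∀ t ∈ Ici (0 : ℝ), f t * ∫ x in Ico 0 t, (Iio s).indicator 1 x = f t * min t s :=
    fun t ht => by
      rw [integral_indicator_one measurableSet_Iio, measureReal_restrict_apply measurableSet_Iio,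
        inter_comm, Ico_inter_Iio, Real.volume_real_Ico_of_le (le_min ht hs), sub_zero]
  rwa [setIntegral_congr_fun measurableSet_Ici hr, funext hl, integral_indicator measurableSet_Iio,
    Measure.restrict_restrict measurableSet_Iio, Iio_inter_Ici] at h

lemma setIntegral_integral_Ioi_sq (hf : Integrable f)
    (hm : IntegrableOn (fun t => t * f t) (Ici 0)) :
    ∫ x in Ici 0, (∫ t in Ioi x, f t) ^ 2 = ∫ t in Ici 0, ∫ s in Ici 0, min t s * f t * f s := by
  calc ∫ x in Ici 0, (∫ t in Ioi x, f t) ^ 2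
      = ∫ t in Ici 0, f t * ∫ x in Ico 0 t, ∫ s in Ioi x, f s := by
        simp_rw [sq]; exact setIntegral_integral_Ioi_mul_self hf hm
    _ = ∫ t in Ici 0, f t * ∫ s in Ici 0, f s * min s t :=
        setIntegral_congr_fun measurableSet_Ici fun t ht => by
          rw [setIntegral_Ico_integral_Ioi hf hm ht]
    _ = ∫ t in Ici 0, ∫ s in Ici 0, min t s * f t * f s := by
        simp_rw [← integral_const_mul, min_comm, mul_comm, mul_left_comm]

lemma W_eq_neg_integral_Ioi (hf : Integrable f) (h0 : ∫ t, f t = 0) (x : ℝ) :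
    W f x = -∫ t in Ioi x, f t := by
  linarith [W_add_integral_Ioi hf x]

lemma Phi_eq_setIntegral_Ico (hf : Integrable f) (h0 : ∫ t, f t = 0) {t : ℝ} (ht : 0 ≤ t) :
    Phi f t = 4 * π * ∫ x in Ico 0 t, ∫ s in Ioi x, f s := by
  rw [Phi, intervalIntegral.integral_of_le ht, integral_Ioc_eq_integral_Ioo,
    ← integral_Ico_eq_integral_Ioo]
  simp_rw [W_eq_neg_integral_Ioi hf h0, integral_neg]
  ring

lemma integrableOn_Ici_W_sq (hf : Integrable f) (h0 : ∫ t, f t = 0)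
    (hm : IntegrableOn (fun t => t * f t) (Ici 0)) :
    IntegrableOn (fun x => W f x ^ 2) (Ici 0) := by
  refine ((integrableOn_integral_Ioi hf hm).norm.const_mul (∫ t, ‖f t‖)).mono'
    ((continuous_W hf).pow 2).aestronglyMeasurable (.of_forall fun x => ?_)
  rw [norm_pow, sq, ← norm_neg (∫ t in Ioi x, f t), ← W_eq_neg_integral_Ioi hf h0]
  exact mul_le_mul_of_nonneg_right (norm_setIntegral_le_integral_norm hf _) (norm_nonneg _)

lemma setIntegral_Ici_W_sq (hf : Integrable f) (h0 : ∫ t, f t = 0)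
    (hm : IntegrableOn (fun t => t * f t) (Ici 0)) :
    ∫ x in Ici 0, W f x ^ 2 = ∫ x in Ici 0, ∫ y in Ici 0, min x y * f x * f y := by
  simp_rw [W_eq_neg_integral_Ioi hf h0, neg_sq]
  exact setIntegral_integral_Ioi_sq hf hm

lemma setIntegral_Ici_Phi_mul (hf : Integrable f) (h0 : ∫ t, f t = 0)
    (hm : IntegrableOn (fun t => t * f t) (Ici 0)) :
    ∫ x in Ici 0, Phi f x * f x = 4 * π * ∫ x in Ici 0, W f x ^ 2 := by
  calc ∫ x in Ici 0, Phi f x * f x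
      = ∫ t in Ici 0, 4 * π * (f t * ∫ x in Ico 0 t, ∫ s in Ioi x, f s) :=
        setIntegral_congr_fun measurableSet_Ici fun t ht => by
          rw [Phi_eq_setIntegral_Ico hf h0 ht]; ring
    _ = 4 * π * ∫ x in Ici 0, W f x ^ 2 := by
        simp_rw [integral_const_mul, ← setIntegral_integral_Ioi_mul_self hf hm,
          W_eq_neg_integral_Ioi hf h0, neg_sq, sq]

lemma setIntegral_Iic_eq_setIntegral_Ici_comp_neg (h : ℝ → ℝ) :
    ∫ x in Iic 0, h x = ∫ x in Ici 0, h (-x) := by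
  rw [integral_Ici_eq_integral_Ioi, integral_comp_neg_Ioi, neg_zero]

lemma W_comp_neg (hf : Integrable f) (h0 : ∫ t, f t = 0) (x : ℝ) :
    W (fun y => f (-y)) x = -W f (-x) := by
  rw [W, integral_comp_neg_Iic, W_eq_neg_integral_Ioi hf h0, neg_neg]

lemma Phi_comp_neg (hf : Integrable f) (h0 : ∫ t, f t = 0) (x : ℝ) :
    Phi (fun y => f (-y)) x = Phi f (-x) := by
  simp_rw [Phi, W_comp_neg hf h0]
  rw [intervalIntegral.integral_neg, intervalIntegral.integral_comp_neg (W f), neg_zero,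
    intervalIntegral.integral_symm 0 (-x)]
  ring

lemma setIntegral_Iic_min_abs_mul (f : ℝ → ℝ) :
    ∫ x in Iic 0, ∫ y in Iic 0, min |x| |y| * f x * f y
      = ∫ x in Ici 0, ∫ y in Ici 0, min x y * f (-x) * f (-y) := by
  rw [setIntegral_Iic_eq_setIntegral_Ici_comp_neg]
  refine setIntegral_congr_fun measurableSet_Ici fun x hx => ?_
  rw [setIntegral_Iic_eq_setIntegral_Ici_comp_neg]
  refine setIntegral_congr_fun measurableSet_Ici fun y hy => ?_
  rw [abs_neg, abs_neg, abs_of_nonneg (mem_Ici.1 hx), abs_of_nonneg (mem_Ici.1 hy)]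

lemma integral_comp_neg_eq_zero (h0 : ∫ t, f t = 0) : ∫ t, f (-t) = 0 :=
  (integral_neg_eq_self f volume).trans h0

lemma integrableOn_Ici_mul_of_abs (hm : Integrable fun x => |x| * f x) :
    IntegrableOn (fun t => t * f t) (Ici 0) :=
  hm.integrableOn.congr_fun (fun t ht => by dsimp only; rw [abs_of_nonneg ht]) measurableSet_Ici

lemma integrableOn_Ici_mul_comp_neg_of_abs (hm : Integrable fun x => |x| * f x) :
    IntegrableOn (fun t => t * f (-t)) (Ici 0) :=
  hm.comp_neg.integrableOn.congr_fun (fun t ht => by dsimp only; rw [abs_neg, abs_of_nonneg ht])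
    measurableSet_Ici

lemma integral_W_sq (hf : Integrable f) (h0 : ∫ t, f t = 0)
    (hm : Integrable fun x => |x| * f x) :
    ∫ x, W f x ^ 2 = (∫ x in Ici 0, W (fun y => f (-y)) x ^ 2) + ∫ x in Ici 0, W f x ^ 2 := by
  have hIci := integrableOn_Ici_W_sq hf h0 (integrableOn_Ici_mul_of_abs hm)
  have hIic : IntegrableOn (fun x => W f x ^ 2) (Iic 0) := by
    have h : IntegrableOn (fun x => W (fun y => f (-y)) x ^ 2) (Ici (-0)) := by
      rw [neg_zero]
      exact integrableOn_Ici_W_sq hf.comp_neg (integral_comp_neg_eq_zero h0)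
        (integrableOn_Ici_mul_comp_neg_of_abs hm)
    simpa only [W_comp_neg hf h0, neg_neg, neg_sq] using h.comp_neg_Iic
  rw [← intervalIntegral.integral_Iic_add_Ioi hIic (hIci.mono_set Ioi_subset_Ici_self),
    ← integral_Ici_eq_integral_Ioi, setIntegral_Iic_eq_setIntegral_Ici_comp_neg]
  simp_rw [W_comp_neg hf h0, neg_sq]

lemma norm_Phi_le (hf : Integrable f) (x : ℝ) : ‖Phi f x‖ ≤ 4 * π * ((∫ t, ‖f t‖) * |x|) := by
  have h : ‖∫ y in (0 : ℝ)..x, W f y‖ ≤ (∫ t, ‖f t‖) * |x| := by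
    have h := intervalIntegral.norm_integral_le_of_norm_le_const (a := 0) (b := x)
      fun y _ => norm_setIntegral_le_integral_norm hf (Iic y)
    rwa [sub_zero] at h
  have h4π : ‖(-4 : ℝ) * π‖ = 4 * π := by
    rw [norm_mul, norm_neg, Real.norm_of_nonneg pi_pos.le]; norm_num
  rw [Phi, norm_mul, h4π]
  exact mul_le_mul_of_nonneg_left h (by positivity)

lemma integrable_Phi_mul (hf : Integrable f) (hm : Integrable fun x => |x| * f x) :
    Integrable fun x => Phi f x * f x := by
  have hPhi : Continuous (Phi f) := continuous_const.mul
    (intervalIntegral.continuous_primitive (fun a b => (continuous_W hf).intervalIntegrable a b) 0)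
  refine (hm.norm.const_mul (4 * π * ∫ t, ‖f t‖)).mono' (hPhi.aestronglyMeasurable.mul hf.1)
    (.of_forall fun x => ?_)
  calc ‖Phi f x * f x‖ = ‖Phi f x‖ * ‖f x‖ := norm_mul _ _
    _ ≤ 4 * π * ((∫ t, ‖f t‖) * |x|) * ‖f x‖ :=
        mul_le_mul_of_nonneg_right (norm_Phi_le hf x) (norm_nonneg _)
    _ = 4 * π * (∫ t, ‖f t‖) * ‖|x| * f x‖ := by
        simp only [norm_mul, norm_abs_eq_norm, Real.norm_eq_abs]; ring

lemma integral_Phi_mul (hf : Integrable f) (h0 : ∫ t, f t = 0)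
    (hm : Integrable fun x => |x| * f x) :
    ∫ x, Phi f x * f x
      = 4 * π * ((∫ x in Ici 0, W (fun y => f (-y)) x ^ 2) + ∫ x in Ici 0, W f x ^ 2) := by
  have hPhi := integrable_Phi_mul hf hm
  rw [← intervalIntegral.integral_Iic_add_Ioi hPhi.integrableOn hPhi.integrableOn,
    ← integral_Ici_eq_integral_Ioi, setIntegral_Iic_eq_setIntegral_Ici_comp_neg, mul_add,
    ← setIntegral_Ici_Phi_mul hf h0 (integrableOn_Ici_mul_of_abs hm),
    ← setIntegral_Ici_Phi_mul hf.comp_neg (integral_comp_neg_eq_zero h0)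
      (integrableOn_Ici_mul_comp_neg_of_abs hm)]
  simp_rw [Phi_comp_neg hf h0]

end

/-- For neutral `f` with finite first moment: `D₁(f)` as a double integral of `min`,
and `D₁(f) = ∫ Φ_f f`. -/
theorem stmt4 (f : ℝ → ℝ) (hf : Integrable f) (h0 : ∫ x, f x = 0)
    (hm : Integrable (fun x => |x| * f x)) :
    D1 f = 4 * π *
      ((∫ x in Set.Ici (0:ℝ), ∫ y in Set.Ici (0:ℝ), min x y * f x * f y) +
        ∫ x in Set.Iic (0:ℝ), ∫ y in Set.Iic (0:ℝ), min |x| |y| * f x * f y) ∧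
    D1 f = ∫ x, Phi f x * f x := by
  refine ⟨?_, by rw [D1, integral_W_sq hf h0 hm, integral_Phi_mul hf h0 hm]⟩
  rw [D1, integral_W_sq hf h0 hm, setIntegral_Iic_min_abs_mul,
    setIntegral_Ici_W_sq hf h0 (integrableOn_Ici_mul_of_abs hm),
    setIntegral_Ici_W_sq hf.comp_neg (integral_comp_neg_eq_zero h0)
      (integrableOn_Ici_mul_comp_neg_of_abs hm), add_comm]
end

section
/- Sommerfeld ODE lemma: let c_TF := (3/10)(3π²)^{2/3}, λ ∈ ℝ, b ∈ ℝ, and let Φ : (b, ∞) → ℝ be twice differentiable with Φ(x) < λ for all x > b, satisfying Φ''(x) = −4π (3(λ − Φ(x))/(5 c_TF))^{3/2} for all x > b, lim_{x→+∞} Φ(x) = λ, and lim_{x→+∞} Φ'(x) = 0. Then there exists x_b ≤ b such that for all x > b, Φ(x) = λ − c₁/(x − x_b)⁴, where c₁ := 5⁵ c_TF³/(27 π²). -/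
open Real

/-- The three-dimensional Thomas–Fermi constant. -/
noncomputable def cTF : ℝ := (3 / 10) * (3 * π ^ 2) ^ ((2 : ℝ) / 3)

/-- The Sommerfeld constant `c₁ = 5⁵ c_TF³ / (27 π²)`. -/
noncomputable def c1 : ℝ := 5 ^ 5 * cTF ^ 3 / (27 * π ^ 2)

/-!
With `u = λ - Φ` the equation reads `u'' = K u^{3/2}` with `K = 4π (3 / (5 c_TF))^{3/2}`, an
Emden–Fowler equation `u'' = K u^p`. Multiplying by `u'` gives the conserved energy
`u'² - 2K/(p+1) u^{p+1}`, which vanishes because `u, u' → 0` at infinity. Since `u'' > 0` and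
`u' → 0`, `u' < 0`, so `u' = -√(2K/(p+1)) u^{(p+1)/2}`, and then `u^{-(p-1)/2}` has constant
derivative: it is affine, `= m (x - x_b)`, and it is positive on `(b, ∞)`, so `x_b ≤ b`.
For `p = 3/2` this gives `u = (m (x - x_b))^{-4}` with `m⁻⁴ = 400 / K² = c₁`.
-/

open Filter Set Topology

lemma cTF_pos : 0 < cTF := by
  unfold cTF
  positivity

lemma c1_eq : c1 = 400 / (4 * π * (3 / (5 * cTF)) ^ ((3 : ℝ) / 2)) ^ 2 := by
  have hcTF := cTF_pos
  have hcube : ((3 / (5 * cTF)) ^ ((3 : ℝ) / 2)) ^ 2 = (3 / (5 * cTF)) ^ 3 := by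
    rw [← rpow_natCast, ← rpow_mul (by positivity)]
    norm_num
  rw [c1, mul_pow, hcube]
  field_simp
  ring

lemma rpow_three_halves_profile {K t : ℝ} (hK : 0 < K) (ht : 0 < t) :
    ((3 / 2 - 1) / 2 * √(2 * K / (3 / 2 + 1)) * t) ^ (-2 / (3 / 2 - 1) : ℝ) =
      400 / K ^ 2 / t ^ 4 := by
  have hsq : √(2 * K / (3 / 2 + 1)) ^ 2 = 2 * K / (3 / 2 + 1) := sq_sqrt (by positivity)
  rw [show (-2 / (3 / 2 - 1) : ℝ) = -(4 : ℕ) by norm_num, rpow_neg (by positivity), rpow_natCast,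
    mul_pow, mul_pow, show √(2 * K / (3 / 2 + 1)) ^ 4 = (√(2 * K / (3 / 2 + 1)) ^ 2) ^ 2 by ring,
    hsq]
  field_simp
  ring

lemma sub_eq_mul_sub_of_hasDerivAt_Ioi {f : ℝ → ℝ} {b c x y : ℝ}
    (hf : ∀ t, b < t → HasDerivAt f c t) (hx : b < x) (hy : b < y) :
    f y - f x = c * (y - x) := by
  have hg : ∀ t ∈ Ioi b, HasDerivAt (fun t => f t - c * t) 0 t := fun t ht => by
    have := (hf t ht).sub ((hasDerivAt_id' t).const_mul c)
    rwa [mul_one, sub_self] at this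
  have := isOpen_Ioi.is_const_of_deriv_eq_zero isPreconnected_Ioi
    (fun t ht => (hg t ht).differentiableAt.differentiableWithinAt)
    (fun t ht => (hg t ht).deriv) (mem_Ioi.2 hy) (mem_Ioi.2 hx)
  linarith

lemma eq_of_hasDerivAt_zero_of_tendsto {f : ℝ → ℝ} {b L x : ℝ}
    (hf : ∀ t, b < t → HasDerivAt f 0 t) (hlim : Tendsto f atTop (𝓝 L)) (hx : b < x) :
    f x = L := by
  refine tendsto_nhds_unique (tendsto_const_nhds.congr' ?_) hlim
  filter_upwards [eventually_gt_atTop b] with y hy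
  linarith [sub_eq_mul_sub_of_hasDerivAt_Ioi hf hx hy]

lemma neg_of_hasDerivAt_pos_of_tendsto_zero {f f' : ℝ → ℝ} {b x : ℝ}
    (hf : ∀ t, b < t → HasDerivAt f (f' t) t) (hf' : ∀ t, b < t → 0 < f' t)
    (hlim : Tendsto f atTop (𝓝 0)) (hx : b < x) : f x < 0 := by
  have hmono : StrictMonoOn f (Ioi b) := by
    refine strictMonoOn_of_hasDerivWithinAt_pos (f' := f') (convex_Ioi b)
      (fun t ht => (hf t ht).continuousAt.continuousWithinAt) (fun t ht => ?_) (fun t ht => ?_)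
    · rw [interior_Ioi] at ht ⊢
      exact (hf t ht).hasDerivWithinAt
    · rw [interior_Ioi] at ht
      exact hf' t ht
  have hx1 : f (x + 1) ≤ 0 := by
    refine ge_of_tendsto hlim ?_
    filter_upwards [eventually_gt_atTop (x + 1)] with y hy
    exact (hmono (mem_Ioi.2 (by linarith)) (mem_Ioi.2 (by linarith)) hy).le
  exact (hmono (mem_Ioi.2 hx) (mem_Ioi.2 (by linarith)) (lt_add_one x)).trans_le hx1

section EmdenFowler

variable {K p b : ℝ} {u u' : ℝ → ℝ}

lemma hasDerivAt_emdenFowler_energy (hp : 0 ≤ p)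
    (hu' : ∀ x, b < x → HasDerivAt u (u' x) x)
    (hu'' : ∀ x, b < x → HasDerivAt u' (K * u x ^ p) x) {x : ℝ} (hx : b < x) :
    HasDerivAt (fun y => u' y ^ 2 - 2 * K / (p + 1) * u y ^ (p + 1)) 0 x := by
  have hpow := (hu' x hx).rpow_const (p := p + 1) (Or.inr (by linarith))
  refine (((hu'' x hx).pow 2).sub (hpow.const_mul (2 * K / (p + 1)))).congr_deriv ?_
  rw [add_sub_cancel_right]
  field_simp
  ring

lemma emdenFowler_energy_eq_zero (hp : 0 ≤ p)
    (hu' : ∀ x, b < x → HasDerivAt u (u' x) x)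
    (hu'' : ∀ x, b < x → HasDerivAt u' (K * u x ^ p) x)
    (hlim : Tendsto u atTop (𝓝 0)) (hlim' : Tendsto u' atTop (𝓝 0)) {x : ℝ} (hx : b < x) :
    u' x ^ 2 = 2 * K / (p + 1) * u x ^ (p + 1) := by
  have hpow : Tendsto (fun y => u y ^ (p + 1)) atTop (𝓝 0) := by
    simpa [zero_rpow (by linarith : p + 1 ≠ 0)] using
      hlim.rpow_const (p := p + 1) (Or.inr (by linarith))
  have hE := eq_of_hasDerivAt_zero_of_tendsto
    (fun t ht => hasDerivAt_emdenFowler_energy hp hu' hu'' ht)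
    (by simpa using (hlim'.pow 2).sub (hpow.const_mul (2 * K / (p + 1)))) hx
  linarith

lemma emdenFowler_deriv_eq (hK : 0 < K) (hp : 0 ≤ p) (hu : ∀ x, b < x → 0 < u x)
    (hu' : ∀ x, b < x → HasDerivAt u (u' x) x)
    (hu'' : ∀ x, b < x → HasDerivAt u' (K * u x ^ p) x)
    (hlim : Tendsto u atTop (𝓝 0)) (hlim' : Tendsto u' atTop (𝓝 0)) {x : ℝ} (hx : b < x) :
    u' x = -(√(2 * K / (p + 1)) * u x ^ ((p + 1) / 2)) := by
  have hneg : u' x < 0 := neg_of_hasDerivAt_pos_of_tendsto_zero hu''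
    (fun t ht => mul_pos hK (rpow_pos_of_pos (hu t ht) p)) hlim' hx
  have hsqrt : √(u x ^ (p + 1)) = u x ^ ((p + 1) / 2) := by
    rw [sqrt_eq_rpow, ← rpow_mul (hu x hx).le]
    ring_nf
  rw [← hsqrt, ← sqrt_mul (by positivity), ← emdenFowler_energy_eq_zero hp hu' hu'' hlim hlim' hx,
    sqrt_sq_eq_abs, abs_of_neg hneg, neg_neg]

lemma hasDerivAt_rpow_emdenFowler (hK : 0 < K) (hp : 0 ≤ p) (hu : ∀ x, b < x → 0 < u x)
    (hu' : ∀ x, b < x → HasDerivAt u (u' x) x)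
    (hu'' : ∀ x, b < x → HasDerivAt u' (K * u x ^ p) x)
    (hlim : Tendsto u atTop (𝓝 0)) (hlim' : Tendsto u' atTop (𝓝 0)) {x : ℝ} (hx : b < x) :
    HasDerivAt (fun y => u y ^ (-(p - 1) / 2)) ((p - 1) / 2 * √(2 * K / (p + 1))) x := by
  refine ((hu' x hx).rpow_const (Or.inl (hu x hx).ne')).congr_deriv ?_
  have hcancel : u x ^ ((p + 1) / 2) * u x ^ (-(p - 1) / 2 - 1) = 1 := by
    rw [← rpow_add (hu x hx)]
    ring_nf
    exact rpow_zero _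
  rw [emdenFowler_deriv_eq hK hp hu hu' hu'' hlim hlim' hx]
  linear_combination ((p - 1) / 2 * √(2 * K / (p + 1))) * hcancel

theorem emdenFowler_eq_rpow_of_tendsto_zero (hK : 0 < K) (hp : 1 < p)
    (hu : ∀ x, b < x → 0 < u x) (hu' : ∀ x, b < x → HasDerivAt u (u' x) x)
    (hu'' : ∀ x, b < x → HasDerivAt u' (K * u x ^ p) x)
    (hlim : Tendsto u atTop (𝓝 0)) (hlim' : Tendsto u' atTop (𝓝 0)) :
    ∃ xb ≤ b, ∀ x, b < x →
      u x = ((p - 1) / 2 * √(2 * K / (p + 1)) * (x - xb)) ^ (-2 / (p - 1)) := by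
  have hv := fun x (hx : b < x) =>
    hasDerivAt_rpow_emdenFowler hK (by linarith) hu hu' hu'' hlim hlim' hx
  set m := (p - 1) / 2 * √(2 * K / (p + 1))
  have hm : 0 < m := mul_pos (by linarith) (sqrt_pos.2 (by positivity))
  -- `xb` is the zero of the affine function `u ^ (-(p - 1) / 2)`.
  set xb := (b + 1) - u (b + 1) ^ (-(p - 1) / 2) / m with hxb
  have hvx : ∀ x, b < x → u x ^ (-(p - 1) / 2) = m * (x - xb) := fun x hx => by
    have := sub_eq_mul_sub_of_hasDerivAt_Ioi hv (lt_add_one b) hx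
    rw [hxb, mul_sub, mul_sub, mul_div_cancel₀ _ hm.ne']
    linarith
  refine ⟨xb, ?_, fun x hx => ?_⟩
  · by_contra! hxb
    have := hvx xb hxb
    rw [sub_self, mul_zero] at this
    exact (rpow_pos_of_pos (hu xb hxb) _).ne' this
  · rw [← hvx x hx, ← rpow_mul (hu x hx).le]
    have hp1 : p - 1 ≠ 0 := by linarith
    rw [show -(p - 1) / 2 * (-2 / (p - 1)) = 1 by field_simp, rpow_one]

end EmdenFowler

/-- Sommerfeld ODE lemma: a solution of `Φ'' = -4π (3(λ-Φ)/(5 c_TF))^{3/2}` on `(b, ∞)`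
with `Φ < λ`, `Φ → λ` and `Φ' → 0` at `+∞` is explicit: `Φ(x) = λ - c₁/(x - x_b)⁴`. -/
theorem stmt12 (lam b : ℝ) (Φ Φ' Φ'' : ℝ → ℝ)
    (hlt : ∀ x, b < x → Φ x < lam)
    (hd1 : ∀ x, b < x → HasDerivAt Φ (Φ' x) x)
    (hd2 : ∀ x, b < x → HasDerivAt Φ' (Φ'' x) x)
    (hode : ∀ x, b < x →
      Φ'' x = -4 * π * (3 * (lam - Φ x) / (5 * cTF)) ^ ((3 : ℝ) / 2))
    (hlim : Filter.Tendsto Φ Filter.atTop (nhds lam))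
    (hlim' : Filter.Tendsto Φ' Filter.atTop (nhds 0)) :
    ∃ xb : ℝ, xb ≤ b ∧ ∀ x, b < x → Φ x = lam - c1 / (x - xb) ^ 4 := by
  have hcTF := cTF_pos
  set K := 4 * π * (3 / (5 * cTF)) ^ ((3 : ℝ) / 2)
  have hK : 0 < K := by positivity
  have hu : ∀ x, b < x → 0 < lam - Φ x := fun x hx => sub_pos.2 (hlt x hx)
  have hu'' : ∀ x, b < x → HasDerivAt (fun y => -Φ' y) (K * (lam - Φ x) ^ ((3 : ℝ) / 2)) x := by
    intro x hx
    refine (hd2 x hx).neg.congr_deriv ?_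
    rw [hode x hx, mul_div_right_comm, mul_rpow (by positivity) (hu x hx).le]
    ring
  obtain ⟨xb, hxb, hΦ⟩ := emdenFowler_eq_rpow_of_tendsto_zero hK (by norm_num) hu
    (fun x hx => (hd1 x hx).const_sub lam) hu''
    (by simpa using (tendsto_const_nhds (x := lam)).sub hlim) (by simpa using hlim'.neg)
  refine ⟨xb, hxb, fun x hx => ?_⟩
  rw [c1_eq, ← rpow_three_halves_profile hK (by linarith), ← hΦ x hx]
  ring
end

section
/- One-dimensional maximum principle: let V : ℝ → ℝ be differentiable on ℝ, with V'(x) → 0 as x → +∞ and as x → −∞, and such that at every point x with V(x) ≥ 0 the derivative V' is differentiable with (V')'(x) ≥ 0. Then either V(x) ≤ 0 for all x ∈ ℝ, or V is constant. -/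
open Filter

/-- One-dimensional maximum principle: if `V` is differentiable with `V' → 0` at `±∞`,
and `V'' ≥ 0` wherever `V ≥ 0`, then `V ≤ 0` everywhere or `V` is constant. -/
theorem stmt14 (V : ℝ → ℝ) (hV : Differentiable ℝ V)
    (htop : Tendsto (deriv V) atTop (nhds 0))
    (hbot : Tendsto (deriv V) atBot (nhds 0))
    (hconv : ∀ x, 0 ≤ V x → DifferentiableAt ℝ (deriv V) x ∧ 0 ≤ deriv (deriv V) x) :
    (∀ x, V x ≤ 0) ∨ (∃ c, ∀ x, V x = c) := by
  by_cases hle : ∀ x, V x ≤ 0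
  · exact Or.inl hle
  push_neg at hle
  obtain ⟨x₀, hx₀⟩ := hle
  -- monotonicity of `deriv V` on open sets where `V ≥ 0`
  have hmono : ∀ S : Set ℝ, Convex ℝ S → interior S = S → (∀ x ∈ S, 0 ≤ V x) →
      MonotoneOn (deriv V) S := by
    intro S hconvS hintS hpos
    refine monotoneOn_of_deriv_nonneg hconvS
      (fun x hx => ((hconv x (hpos x hx)).1.continuousAt).continuousWithinAt)
      (fun x hx => ?_) (fun x hx => ?_)
    · rw [hintS] at hx
      exact (hconv x (hpos x hx)).1.differentiableWithinAt
    · rw [hintS] at hx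
      exact (hconv x (hpos x hx)).2
  -- the right and left "bad" sets
  set SR : Set ℝ := {x | x₀ ≤ x ∧ V x ≤ 0} with hSR
  set SL : Set ℝ := {x | x ≤ x₀ ∧ V x ≤ 0} with hSL
  have hSRclosed : IsClosed SR :=
    (isClosed_le continuous_const continuous_id).inter
      (isClosed_le hV.continuous continuous_const)
  have hSLclosed : IsClosed SL :=
    (isClosed_le continuous_id continuous_const).inter
      (isClosed_le hV.continuous continuous_const)
  by_cases hR : SR.Nonempty
  · -- there is a first zero b to the right of x₀
    obtain ⟨y, hy⟩ := hR
    have hbdd : BddBelow SR := ⟨x₀, fun z hz => hz.1⟩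
    set b := sInf SR with hb
    have hbmem : b ∈ SR := hSRclosed.csInf_mem ⟨y, hy⟩ hbdd
    have hx₀b : x₀ < b := by
      rcases lt_or_eq_of_le hbmem.1 with h | h
      · exact h
      · exact absurd (h ▸ hbmem.2) (not_le.2 hx₀)
    have hVposR : ∀ x, x₀ ≤ x → x < b → 0 < V x := by
      intro x hx1 hx2
      by_contra h
      exact absurd (csInf_le hbdd ⟨hx1, not_lt.1 h⟩) (not_le.2 hx2)
    -- MVT on [x₀, b] gives a point with negative derivative
    obtain ⟨c, hcmem, hcval⟩ := exists_deriv_eq_slope V hx₀b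
      (hV.continuous.continuousOn) (hV.differentiableOn)
    have hcneg : deriv V c < 0 := by
      rw [hcval]
      apply div_neg_of_neg_of_pos
      · linarith [hbmem.2]
      · linarith
    exfalso
    by_cases hL : SL.Nonempty
    · -- there is also a last zero a to the left of x₀
      obtain ⟨z, hz⟩ := hL
      have hbdd' : BddAbove SL := ⟨x₀, fun w hw => hw.1⟩
      set a := sSup SL with ha
      have hamem : a ∈ SL := hSLclosed.csSup_mem ⟨z, hz⟩ hbdd'
      have hax₀ : a < x₀ := by
        rcases lt_or_eq_of_le hamem.1 with h | h
        · exact h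
        · exact absurd (h ▸ hamem.2) (not_le.2 hx₀)
      have hVposL : ∀ x, a < x → x ≤ x₀ → 0 < V x := by
        intro x hx1 hx2
        by_contra h
        exact absurd (le_csSup hbdd' ⟨hx2, not_lt.1 h⟩) (not_le.2 hx1)
      obtain ⟨c', hc'mem, hc'val⟩ := exists_deriv_eq_slope V hax₀
        (hV.continuous.continuousOn) (hV.differentiableOn)
      have hc'pos : 0 < deriv V c' := by
        rw [hc'val]
        apply div_pos
        · linarith [hamem.2]
        · linarith
      have hm := hmono (Set.Ioo a b) (convex_Ioo a b) (interior_Ioo) ?_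
      · have : deriv V c' ≤ deriv V c := by
          apply hm ⟨hc'mem.1, lt_trans hc'mem.2 hx₀b⟩ ⟨lt_trans hax₀ hcmem.1, hcmem.2⟩
          exact le_of_lt (lt_trans hc'mem.2 hcmem.1)
        linarith
      · intro x hx
        rcases le_total x x₀ with h | h
        · exact (hVposL x hx.1 h).le
        · exact (hVposR x h hx.2).le
    · -- V > 0 on Iio b, so deriv V ≤ deriv V c < 0 to the left of c
      have hVpos : ∀ x < b, 0 < V x := by
        intro x hx
        rcases le_total x₀ x with h | h
        · exact hVposR x h hx
        · by_contra hcon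
          exact hL ⟨x, h, not_lt.1 hcon⟩
      have hm := hmono (Set.Iio b) (convex_Iio b) (interior_Iio) (fun x hx => (hVpos x hx).le)
      have hev : ∀ᶠ x in atBot, deriv V x ≤ deriv V c := by
        filter_upwards [eventually_le_atBot c] with x hx
        exact hm (lt_of_le_of_lt hx hcmem.2) hcmem.2 hx
      have := le_of_tendsto hbot hev
      linarith
  · -- V > 0 on [x₀, ∞)
    have hVposR : ∀ x, x₀ ≤ x → 0 < V x := by
      intro x hx
      by_contra h
      exact hR ⟨x, hx, not_lt.1 h⟩
    by_cases hL : SL.Nonempty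
    · exfalso
      obtain ⟨z, hz⟩ := hL
      have hbdd' : BddAbove SL := ⟨x₀, fun w hw => hw.1⟩
      set a := sSup SL with ha
      have hamem : a ∈ SL := hSLclosed.csSup_mem ⟨z, hz⟩ hbdd'
      have hax₀ : a < x₀ := by
        rcases lt_or_eq_of_le hamem.1 with h | h
        · exact h
        · exact absurd (h ▸ hamem.2) (not_le.2 hx₀)
      have hVposL : ∀ x, a < x → x ≤ x₀ → 0 < V x := by
        intro x hx1 hx2
        by_contra h
        exact absurd (le_csSup hbdd' ⟨hx2, not_lt.1 h⟩) (not_le.2 hx1)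
      obtain ⟨c', hc'mem, hc'val⟩ := exists_deriv_eq_slope V hax₀
        (hV.continuous.continuousOn) (hV.differentiableOn)
      have hc'pos : 0 < deriv V c' := by
        rw [hc'val]
        apply div_pos
        · linarith [hamem.2]
        · linarith
      have hm := hmono (Set.Ioi a) (convex_Ioi a) (interior_Ioi) ?_
      · have hev : ∀ᶠ x in atTop, deriv V c' ≤ deriv V x := by
          filter_upwards [eventually_ge_atTop c'] with x hx
          exact hm hc'mem.1 (lt_of_lt_of_le hc'mem.1 hx) hx
        have := ge_of_tendsto htop hev
        linarith
      · intro x hx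
        rcases le_total x x₀ with h | h
        · exact (hVposL x hx h).le
        · exact (hVposR x h).le
    · -- V > 0 everywhere, deriv V monotone on ℝ, so deriv V ≡ 0
      have hVpos : ∀ x, 0 < V x := by
        intro x
        rcases le_total x₀ x with h | h
        · exact hVposR x h
        · by_contra hcon
          exact hL ⟨x, h, not_lt.1 hcon⟩
      have hm : Monotone (deriv V) := by
        have := hmono Set.univ convex_univ interior_univ (fun x _ => (hVpos x).le)
        exact monotoneOn_univ.1 this
      have hzero : ∀ x, deriv V x = 0 := by
        intro x
        have h1 : deriv V x ≤ 0 := by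
          refine ge_of_tendsto htop ?_
          filter_upwards [eventually_ge_atTop x] with y hy
          exact hm hy
        have h2 : 0 ≤ deriv V x := by
          refine le_of_tendsto hbot ?_
          filter_upwards [eventually_le_atBot x] with y hy
          exact hm hy
        linarith
      exact Or.inr ⟨V 0, fun x => is_const_of_deriv_eq_zero hV hzero x 0⟩
end
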